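/- arXiv:1805.04211 — 6 statements merged into one kernel-verified Lean document; each statement's English description precedes it below -/
import Mathlib

section
/- Let λ₁, λ₂ ∈ ℝ be nonzero with λ₁ ≠ λ₂, and define r(λ₁,λ₂) = λ₁²λ₂²(λ₂−λ₁)² / (|λ₁(λ₁−1)| + |λ₂(λ₂−1)|)². Then for all γ ∈ [0,1], the quantity λ₁²λ₂²(λ₂−λ₁)² · (1−γ)γ / ((1−γ)λ₁²(λ₁−1)² + γλ₂²(λ₂−1)²) is bounded in absolute value by r(λ₁,λ₂), provided λ₁ ≠ 1 and λ₂ ≠ 1. -/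
/-! The denominator is a convex combination of `a² = (λ₁(λ₁-1))²` and `b² = (λ₂(λ₂-1))²`, and
`(1-γ)a² + γb² - (1-γ)γ(a+b)² = ((1-γ)a - γb)² ≥ 0`. Hence the denominator is at least
`(1-γ)γ(a+b)²`, which bounds the quotient by `λ₁²λ₂²(λ₂-λ₁)²/(a+b)²` for every `γ`, with equality
at `γ = a/(a+b)`. -/

section

variable {K : Type*} [Field K] [LinearOrder K] [IsStrictOrderedRing K]

theorem one_sub_mul_mul_add_sq_le (a b t : K) :
    (1 - t) * t * (a + b) ^ 2 ≤ (1 - t) * a ^ 2 + t * b ^ 2 := by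
  have h : (1 - t) * a ^ 2 + t * b ^ 2 - (1 - t) * t * (a + b) ^ 2 = ((1 - t) * a - t * b) ^ 2 := by
    ring
  linarith [sq_nonneg ((1 - t) * a - t * b)]

theorem mul_div_le_div_of_mul_le {c w s d : K} (hc : 0 ≤ c) (hw : 0 ≤ w) (hs : 0 < s)
    (h : w * s ≤ d) : c * w / d ≤ c / s := by
  rcases (mul_nonneg hw hs.le |>.trans h).eq_or_lt with hd | hd
  · rw [← hd, div_zero]
    exact div_nonneg hc hs.le
  · rw [div_le_div_iff₀ hd hs, mul_assoc]
    exact mul_le_mul_of_nonneg_left h hc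

theorem mul_div_convex_comb_sq_le {c a b t : K} (hc : 0 ≤ c) (ha : 0 ≤ a) (hb : 0 ≤ b)
    (ht₀ : 0 ≤ t) (ht₁ : t ≤ 1) :
    c * ((1 - t) * t) / ((1 - t) * a ^ 2 + t * b ^ 2) ≤ c / (a + b) ^ 2 := by
  rcases (add_nonneg ha hb).eq_or_lt with hab | hab
  · obtain ⟨rfl, rfl⟩ : a = 0 ∧ b = 0 := ⟨by linarith, by linarith⟩
    simp
  · exact mul_div_le_div_of_mul_le hc (mul_nonneg (sub_nonneg.2 ht₁) ht₀) (pow_pos hab 2)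
      (one_sub_mul_mul_add_sq_le a b t)

end

theorem aa_eigenvalue_bound_general (l1 l2 : ℝ)
    (γ : ℝ) (hγ : γ ∈ Set.Icc (0:ℝ) 1) :
    |l1^2 * l2^2 * (l2 - l1)^2 * ((1 - γ) * γ) /
      ((1 - γ) * l1^2 * (l1 - 1)^2 + γ * l2^2 * (l2 - 1)^2)| ≤
    l1^2 * l2^2 * (l2 - l1)^2 / (|l1 * (l1 - 1)| + |l2 * (l2 - 1)|)^2 := by
  obtain ⟨hγ₀, hγ₁⟩ := hγ
  have hsq (l : ℝ) : l ^ 2 * (l - 1) ^ 2 = |l * (l - 1)| ^ 2 := by rw [sq_abs]; ring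
  have hw : 0 ≤ 1 - γ := sub_nonneg.2 hγ₁
  rw [mul_assoc (1 - γ), mul_assoc γ, hsq l1, hsq l2, abs_of_nonneg]
  · exact mul_div_convex_comb_sq_le (by positivity) (abs_nonneg _) (abs_nonneg _) hγ₀ hγ₁
  · exact div_nonneg (mul_nonneg (by positivity) (mul_nonneg hw hγ₀))
      (add_nonneg (mul_nonneg hw (sq_nonneg _)) (mul_nonneg hγ₀ (sq_nonneg _)))

/-- Key maximization step in the worst-case analysis of restarted Anderson
acceleration AA*(1). -/
theorem aa_eigenvalue_bound (l1 l2 : ℝ) (h1 : l1 ≠ 0) (h2 : l2 ≠ 0)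
    (hne : l1 ≠ l2) (h1' : l1 ≠ 1) (h2' : l2 ≠ 1)
    (γ : ℝ) (hγ : γ ∈ Set.Icc (0:ℝ) 1) :
    |l1^2 * l2^2 * (l2 - l1)^2 * ((1 - γ) * γ) /
      ((1 - γ) * l1^2 * (l1 - 1)^2 + γ * l2^2 * (l2 - 1)^2)| ≤
    l1^2 * l2^2 * (l2 - l1)^2 / (|l1 * (l1 - 1)| + |l2 * (l2 - 1)|)^2 :=
  aa_eigenvalue_bound_general l1 l2 γ hγ
end

section
/- Let λ₁ > 1 and λ₂ ∈ (0,1). Then r(λ₁,λ₂) := λ₁²λ₂²(λ₂−λ₁)² / (λ₁(λ₁−1) + λ₂(1−λ₂))² < 1. Consequently, restarted Anderson acceleration AA*(1) converges even though the underlying Richardson iteration with eigenvalue λ₁ > 1 is non-contractive in that eigendirection. -/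
/-! With `D = λ₁(λ₁-1) + λ₂(1-λ₂) > 0` and `N = λ₁λ₂(λ₂-λ₁) < 0`, the ratio is `N² / D²`, so it
suffices that `-D < N`. This is the factorization `D + N = (λ₁-λ₂)(λ₁-1)(1-λ₂)`, whose three factors
are positive when `λ₂ < 1 < λ₁`. -/

namespace AndersonAcceleration

lemma denom_add_numer_eq (l1 l2 : ℝ) :
    l1 * (l1 - 1) + l2 * (1 - l2) + l1 * l2 * (l2 - l1) = (l1 - l2) * (l1 - 1) * (1 - l2) := by
  ring

lemma denom_pos {l1 l2 : ℝ} (h1 : 1 < l1) (h2l : 0 < l2) (h2u : l2 < 1) :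
    0 < l1 * (l1 - 1) + l2 * (1 - l2) :=
  add_pos (mul_pos (by linarith) (by linarith)) (mul_pos h2l (by linarith))

lemma numer_neg {l1 l2 : ℝ} (h1 : 1 < l1) (h2l : 0 < l2) (h2u : l2 < 1) :
    l1 * l2 * (l2 - l1) < 0 :=
  mul_neg_of_pos_of_neg (mul_pos (by linarith) h2l) (by linarith)

lemma neg_denom_lt_numer {l1 l2 : ℝ} (h1 : 1 < l1) (h2u : l2 < 1) :
    -(l1 * (l1 - 1) + l2 * (1 - l2)) < l1 * l2 * (l2 - l1) := by
  have hprod : 0 < (l1 - l2) * (l1 - 1) * (1 - l2) :=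
    mul_pos (mul_pos (by linarith) (by linarith)) (by linarith)
  linarith [denom_add_numer_eq l1 l2]

end AndersonAcceleration

/-- AA*(1) converges even for a non-contractive Richardson iteration with one
eigenvalue larger than one. -/
theorem aa_converges_noncontractive (l1 l2 : ℝ) (h1 : 1 < l1)
    (h2l : 0 < l2) (h2u : l2 < 1) :
    l1^2 * l2^2 * (l2 - l1)^2 / (l1 * (l1 - 1) + l2 * (1 - l2))^2 < 1 := by
  have hD := AndersonAcceleration.denom_pos h1 h2l h2u
  rw [div_lt_one (pow_pos hD 2), show l1^2 * l2^2 * (l2 - l1)^2 = (l1 * l2 * (l2 - l1))^2 by ring]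
  exact sq_lt_sq' (AndersonAcceleration.neg_denom_lt_numer h1 h2u)
    ((AndersonAcceleration.numer_neg h1 h2l h2u).trans hD)
end

section
/- Fix λ₂ ∈ (0,1). The function λ₁ ↦ r(λ₁,λ₂) = λ₁²λ₂²(λ₂−λ₁)² / (λ₁(λ₁−1) + λ₂(1−λ₂))² satisfies r(1,λ₂) = 1 and is strictly decreasing in λ₁ on (1,∞). -/
/-!
The denominator factors as `λ₁(λ₁ - 1) + λ₂(1 - λ₂) = (λ₁ - λ₂)(λ₁ - (1 - λ₂))`, so away from
`λ₁ = λ₂` the factor `(λ₂ - λ₁)²` cancels and `r(λ₁, λ₂) = (λ₂ λ₁ / (λ₁ - (1 - λ₂)))²`.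
This is `1` at `λ₁ = 1`, and the base `λ₂ λ₁ / (λ₁ - (1 - λ₂)) = λ₂ + λ₂ (1 - λ₂) / (λ₁ - (1 - λ₂))`
is positive and strictly decreasing for `λ₁ > 1 - λ₂`, hence so is its square.
-/

open Set

theorem mul_sub_one_add_mul_one_sub (x y : ℝ) :
    x * (x - 1) + y * (1 - y) = (x - y) * (x - (1 - y)) := by
  ring

theorem aa_rate_eq_sq {x y : ℝ} (hxy : x ≠ y) :
    x ^ 2 * y ^ 2 * (y - x) ^ 2 / (x * (x - 1) + y * (1 - y)) ^ 2 =
      (y * x / (x - (1 - y))) ^ 2 := by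
  have hnum : x ^ 2 * y ^ 2 * (y - x) ^ 2 = (y * x) ^ 2 * (x - y) ^ 2 := by ring
  rw [hnum, mul_sub_one_add_mul_one_sub, mul_comm (x - y), mul_pow (x - (1 - y)),
    mul_div_mul_right _ _ (pow_ne_zero 2 (sub_ne_zero.2 hxy)), div_pow]

theorem strictAntiOn_mul_div_sub {a c : ℝ} (ha : 0 < a) (hc : 0 < c) :
    StrictAntiOn (fun x => c * x / (x - a)) (Ioi a) := by
  intro x hx y hy hxy
  rw [div_lt_div_iff₀ (sub_pos.2 hy) (sub_pos.2 hx)]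
  nlinarith [mul_pos (mul_pos hc ha) (sub_pos.2 hxy)]

/-- For fixed λ₂ ∈ (0,1), r(·,λ₂) equals 1 at λ₁ = 1 and is strictly decreasing
on (1,∞). -/
theorem aa_rate_strict_anti (l2 : ℝ) (h2l : 0 < l2) (h2u : l2 < 1) :
    (fun l1 : ℝ => l1^2 * l2^2 * (l2 - l1)^2 /
        (l1 * (l1 - 1) + l2 * (1 - l2))^2) 1 = 1 ∧
    StrictAntiOn (fun l1 : ℝ => l1^2 * l2^2 * (l2 - l1)^2 /
        (l1 * (l1 - 1) + l2 * (1 - l2))^2) (Set.Ioi 1) := by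
  have hne : ∀ l1 ∈ Ioi (1 : ℝ), l1 ≠ l2 := fun l1 h => (h2u.trans h).ne'
  have hshift : ∀ l1 ∈ Ioi (1 : ℝ), l1 ∈ Ioi (1 - l2) := fun l1 h => by
    simp only [mem_Ioi] at h ⊢; linarith
  constructor
  · beta_reduce
    rw [aa_rate_eq_sq h2u.ne', sub_sub_cancel, mul_one, div_self h2l.ne', one_pow]
  · intro a ha b hb hab
    simp only [aa_rate_eq_sq (hne a ha), aa_rate_eq_sq (hne b hb)]
    have hbase : 0 < l2 * b / (b - (1 - l2)) :=
      div_pos (mul_pos h2l (zero_lt_one.trans hb)) (sub_pos.2 (hshift b hb))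
    exact pow_lt_pow_left₀
      (strictAntiOn_mul_div_sub (sub_pos.2 h2u) h2l (hshift a ha) (hshift b hb) hab)
      hbase.le two_ne_zero
end

section
/- Let A be a symmetric n×n real matrix with I − A invertible, F(x) = Ax + b with fixed point x*, and ΔF(x) = F(x) − x = (A − I)x + b. For e = x − x* ≠ 0 with (A − I)²e ≠ 0, the minimizer α of ‖ΔF(F(x)) + α(ΔF(x) − ΔF(F(x)))‖² over α ∈ ℝ satisfies α = ⟨ê, A(A − I)⁻¹ ê⟩, where ê = (A − I)²e / ‖(A − I)²e‖. -/
/-!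
With `e = x - x*`, both residuals are linear in `e`: `ΔF (F x) = (A - 1) A e` and
`ΔF x - ΔF (F x) = -w` with `w = (A - 1)² e`. The normal equation of the one-dimensional
least-squares problem gives `α ‖w‖² = ⟪(A - 1) A e, w⟫`, and since `A` commutes with `A - 1`,
`(A - 1) A e = A (A - 1)⁻¹ w`; normalising `w` gives the claimed quadratic form.
-/

open Matrix

section DotProduct

variable {ι R : Type*} [Fintype ι]

theorem dotProduct_add_smul_self [CommRing R] (u v : ι → R) (β : R) :
    (u + β • v) ⬝ᵥ (u + β • v) = u ⬝ᵥ u + 2 * β * (u ⬝ᵥ v) + β ^ 2 * (v ⬝ᵥ v) := by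
  simp only [dotProduct_add, add_dotProduct, smul_dotProduct, dotProduct_smul, smul_eq_mul,
    dotProduct_comm v u]
  ring

theorem dotProduct_self_pos [Ring R] [LinearOrder R] [IsStrictOrderedRing R] {v : ι → R}
    (hv : v ≠ 0) : 0 < v ⬝ᵥ v :=
  (Finset.sum_nonneg fun i _ ↦ mul_self_nonneg (v i)).lt_of_ne'
    (dotProduct_self_eq_zero.not.mpr hv)

theorem mul_dotProduct_self_eq_neg_of_forall_le [Field R] [LinearOrder R] [IsStrictOrderedRing R]
    {u v : ι → R} {α : R}
    (hmin : ∀ β : R, (u + α • v) ⬝ᵥ (u + α • v) ≤ (u + β • v) ⬝ᵥ (u + β • v)) :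
    α * (v ⬝ᵥ v) = -(u ⬝ᵥ v) := by
  rcases eq_or_ne v 0 with rfl | hv
  · simp
  have hW := dotProduct_self_pos hv
  set d := (α * (v ⬝ᵥ v) + u ⬝ᵥ v) / (v ⬝ᵥ v)
  have hd : d * (v ⬝ᵥ v) = α * (v ⬝ᵥ v) + u ⬝ᵥ v := div_mul_cancel₀ _ hW.ne'
  -- moving from `α` to `α - d` changes the objective by `-d² ‖v‖²`
  have h := hmin (α - d)
  rw [dotProduct_add_smul_self, dotProduct_add_smul_self] at h
  have hd0 : d = 0 := by
    have : d ^ 2 * (v ⬝ᵥ v) ≤ 0 := by linear_combination h + 2 * d * hd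
    exact pow_eq_zero_iff two_ne_zero |>.mp <| le_antisymm (nonpos_of_mul_nonpos_left this hW)
      (sq_nonneg d)
  linear_combination -hd + (v ⬝ᵥ v) * hd0

theorem dotProduct_mulVec_normalize (w : ι → ℝ) (M : Matrix ι ι ℝ) :
    ((√(w ⬝ᵥ w))⁻¹ • w) ⬝ᵥ M *ᵥ ((√(w ⬝ᵥ w))⁻¹ • w) = (w ⬝ᵥ M *ᵥ w) / (w ⬝ᵥ w) := by
  rw [mulVec_smul, smul_dotProduct, dotProduct_smul, smul_eq_mul, smul_eq_mul, ← mul_assoc,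
    ← mul_inv, Real.mul_self_sqrt (by simpa using dotProduct_star_self_nonneg w),
    inv_mul_eq_div]

end DotProduct

section AffineIteration

variable {ι R : Type*} [Fintype ι] [CommRing R] {A : Matrix ι ι R} {b xstar : ι → R}

theorem mulVec_add_sub_eq_of_fixed (hfix : A *ᵥ xstar + b = xstar) (y : ι → R) :
    A *ᵥ y + b - xstar = A *ᵥ (y - xstar) := by
  rw [mulVec_sub]
  linear_combination (exp := 1) hfix

variable [DecidableEq ι]

theorem sub_one_mulVec_add_eq_of_fixed (hfix : A *ᵥ xstar + b = xstar) (y : ι → R) :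
    (A - 1) *ᵥ y + b = (A - 1) *ᵥ (y - xstar) := by
  have hb : (A - 1) *ᵥ xstar = -b := by
    rw [sub_mulVec, one_mulVec]
    linear_combination (exp := 1) hfix
  rw [mulVec_sub, hb, sub_neg_eq_add]

theorem residual_comp_eq_of_fixed (hfix : A *ᵥ xstar + b = xstar) (y : ι → R) :
    (A - 1) *ᵥ (A *ᵥ y + b) + b = ((A - 1) * A) *ᵥ (y - xstar) := by
  rw [sub_one_mulVec_add_eq_of_fixed hfix, mulVec_add_sub_eq_of_fixed hfix, mulVec_mulVec]

theorem residual_sub_residual_comp_eq_of_fixed (hfix : A *ᵥ xstar + b = xstar) (y : ι → R) :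
    (A - 1) *ᵥ y + b - ((A - 1) *ᵥ (A *ᵥ y + b) + b) = -(((A - 1) * (A - 1)) *ᵥ (y - xstar)) := by
  rw [residual_comp_eq_of_fixed hfix, sub_one_mulVec_add_eq_of_fixed hfix, ← sub_mulVec,
    ← neg_mulVec]
  congr 1
  noncomm_ring

end AffineIteration

theorem Matrix.mul_nonsing_inv_mul_mul_self {ι R : Type*} [Fintype ι] [DecidableEq ι] [CommRing R]
    {A B : Matrix ι ι R} (hB : IsUnit B.det) (hAB : Commute A B) :
    A * B⁻¹ * (B * B) = B * A := by
  rw [mul_assoc, ← mul_assoc B⁻¹, nonsing_inv_mul B hB, one_mul, hAB.eq]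

theorem aa_mixing_coefficient_general (n : ℕ) (A : Matrix (Fin n) (Fin n) ℝ)
    (hinv : IsUnit (1 - A))
    (b x xstar : Fin n → ℝ) (hfix : A.mulVec xstar + b = xstar)
    (F ΔF : (Fin n → ℝ) → (Fin n → ℝ))
    (hF : ∀ y, F y = A.mulVec y + b)
    (hΔF : ∀ y, ΔF y = (A - 1).mulVec y + b)
    (he2 : ((A - 1) * (A - 1)).mulVec (x - xstar) ≠ 0)
    (ehat : Fin n → ℝ)
    (hehat : ehat = (Real.sqrt (((A - 1) * (A - 1)).mulVec (x - xstar) ⬝ᵥ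
        ((A - 1) * (A - 1)).mulVec (x - xstar)))⁻¹ •
        ((A - 1) * (A - 1)).mulVec (x - xstar))
    (α : ℝ)
    (hmin : ∀ β : ℝ,
      (ΔF (F x) + α • (ΔF x - ΔF (F x))) ⬝ᵥ (ΔF (F x) + α • (ΔF x - ΔF (F x))) ≤
      (ΔF (F x) + β • (ΔF x - ΔF (F x))) ⬝ᵥ (ΔF (F x) + β • (ΔF x - ΔF (F x)))) :
    α = ehat ⬝ᵥ (A * (A - 1)⁻¹).mulVec ehat := by
  set w := ((A - 1) * (A - 1)) *ᵥ (x - xstar)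
  have hnormal : α * (w ⬝ᵥ w) = ((A - 1) * A) *ᵥ (x - xstar) ⬝ᵥ w := by
    have h := mul_dotProduct_self_eq_neg_of_forall_le hmin
    rw [hF, hΔF, hΔF, residual_sub_residual_comp_eq_of_fixed hfix,
      residual_comp_eq_of_fixed hfix] at h
    simpa only [neg_dotProduct, dotProduct_neg, neg_neg] using h
  have hdet : IsUnit (A - 1).det := by
    rw [← isUnit_iff_isUnit_det, ← neg_sub]
    exact hinv.neg
  have hcomm : Commute A (A - 1) := (Commute.refl A).sub_right (Commute.one_right A)
  rw [hehat, dotProduct_mulVec_normalize, mulVec_mulVec,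
    mul_nonsing_inv_mul_mul_self hdet hcomm, eq_div_iff (dotProduct_self_pos he2).ne',
    hnormal, dotProduct_comm]

/-- Explicit formula for the Anderson mixing coefficient as the minimizer of
the one-dimensional least-squares problem. -/
theorem aa_mixing_coefficient (n : ℕ) (A : Matrix (Fin n) (Fin n) ℝ)
    (hA : A.IsSymm) (hinv : IsUnit (1 - A))
    (b x xstar : Fin n → ℝ) (hfix : A.mulVec xstar + b = xstar)
    (F ΔF : (Fin n → ℝ) → (Fin n → ℝ))
    (hF : ∀ y, F y = A.mulVec y + b)
    (hΔF : ∀ y, ΔF y = (A - 1).mulVec y + b)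
    (he : x - xstar ≠ 0)
    (he2 : ((A - 1) * (A - 1)).mulVec (x - xstar) ≠ 0)
    (ehat : Fin n → ℝ)
    (hehat : ehat = (Real.sqrt (((A - 1) * (A - 1)).mulVec (x - xstar) ⬝ᵥ
        ((A - 1) * (A - 1)).mulVec (x - xstar)))⁻¹ •
        ((A - 1) * (A - 1)).mulVec (x - xstar))
    (α : ℝ)
    (hmin : ∀ β : ℝ,
      (ΔF (F x) + α • (ΔF x - ΔF (F x))) ⬝ᵥ (ΔF (F x) + α • (ΔF x - ΔF (F x))) ≤
      (ΔF (F x) + β • (ΔF x - ΔF (F x))) ⬝ᵥ (ΔF (F x) + β • (ΔF x - ΔF (F x)))) :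
    α = ehat ⬝ᵥ (A * (A - 1)⁻¹).mulVec ehat :=
  aa_mixing_coefficient_general n A hinv b x xstar hfix F ΔF hF hΔF he2 ehat hehat α hmin
end

section
/- Let s : ℝ → [0,1] be differentiable and nondecreasing, let φ : ℝⁿ → ℝⁿ be smooth with values componentwise in [0,1] on a set P, and let b : ℝⁿ → ℝⁿ be defined componentwise using a diagonal saturation matrix via b(p) = S(p)·(φ₀ + α² G p_E(p) + (1/N) M p_E(p) + c), where p_E satisfies dp_E/dp = s(p) componentwise, S(p) = diag(s(p_k)), G and M are symmetric positive semidefinite, and α, 1/N ≥ 0. Then the Jacobian of b at any p ∈ P is Db(p) = diag(s'(p_k) φ_k(p)) + α² S(p) G S(p)ᵀ + (1/N) S(p) M S(p)ᵀ, which is symmetric positive semidefinite. -/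
/-!
Since `p_E' = s`, the vector field `φ` is affine in `p_E(p)` with Jacobian `(α² G + M / N) S(p)`, so
the product rule applied to `b = s(p) ⊙ φ(p)` gives `Db = diag(s' φ) + S (α² G + M / N) S`. The first
term is a nonnegative diagonal (`s' ≥ 0` by monotonicity, `φ ≥ 0` on `P`), the second a congruence
of a positive semidefinite matrix.
-/

open Matrix

section

variable {ι : Type*} [Fintype ι] [DecidableEq ι]

theorem hasFDerivAt_map_diagonal {f f' : ℝ → ℝ} (hf : ∀ x, HasDerivAt f (f' x) x) (p : ι → ℝ) :
    HasFDerivAt (fun q k => f (q k))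
      (LinearMap.toContinuousLinearMap (diagonal fun k => f' (p k)).mulVecLin) p := by
  refine hasFDerivAt_pi'' fun k => ((hf (p k)).comp_hasFDerivAt p
    (hasFDerivAt_apply (𝕜 := ℝ) k p)).congr_fderiv ?_
  ext v
  simp [mulVec_diagonal]

theorem hasFDerivAt_const_add_mulVec_map {g g' : ℝ → ℝ} (hg : ∀ x, HasDerivAt g (g' x) x)
    (c : ι → ℝ) (A : Matrix ι ι ℝ) (p : ι → ℝ) :
    HasFDerivAt (fun q => c + A *ᵥ fun k => g (q k))
      (LinearMap.toContinuousLinearMap (A * diagonal fun k => g' (p k)).mulVecLin) p := by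
  refine ((LinearMap.toContinuousLinearMap A.mulVecLin).hasFDerivAt.comp p
    (hasFDerivAt_map_diagonal hg p)).const_add c |>.congr_fderiv ?_
  ext v
  simp

theorem HasFDerivAt.diagonal_mulVec {f f' : ℝ → ℝ} (hf : ∀ x, HasDerivAt f (f' x) x)
    {u : (ι → ℝ) → ι → ℝ} {B : Matrix ι ι ℝ} {p : ι → ℝ}
    (hu : HasFDerivAt u (LinearMap.toContinuousLinearMap B.mulVecLin) p) :
    HasFDerivAt (fun q => diagonal (fun k => f (q k)) *ᵥ u q)
      (LinearMap.toContinuousLinearMap (diagonal (fun k => f' (p k) * u p k) +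
        diagonal (fun k => f (p k)) * B).mulVecLin) p := by
  refine (((hasFDerivAt_map_diagonal hf p).mul hu).congr_fderiv ?_).congr_of_eventuallyEq
    (.of_eq ?_)
  · ext v k
    simp [-mulVec_mulVec, mulVec_diagonal]
    ring
  · ext q k
    simp [mulVec_diagonal]

end

theorem fluid_content_jacobian_general (n : ℕ) (s s' pE : ℝ → ℝ)
    (hs : ∀ x, HasDerivAt s (s' x) x) (hmono : Monotone s)
    (hpE : ∀ x, HasDerivAt pE (s x) x)
    (G M : Matrix (Fin n) (Fin n) ℝ) (hG : G.PosSemidef) (hM : M.PosSemidef)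
    (a2 invN : ℝ) (ha2 : 0 ≤ a2) (hinvN : 0 ≤ invN)
    (φ0 c : Fin n → ℝ) (P : Set (Fin n → ℝ))
    (φ : (Fin n → ℝ) → (Fin n → ℝ))
    (hφ : ∀ p, φ p = φ0 + a2 • G.mulVec (fun k => pE (p k)) +
        invN • M.mulVec (fun k => pE (p k)) + c)
    (hφP : ∀ p ∈ P, ∀ k, φ p k ∈ Set.Icc (0:ℝ) 1)
    (b : (Fin n → ℝ) → (Fin n → ℝ))
    (hb : ∀ p, b p = (Matrix.diagonal (fun k => s (p k))).mulVec (φ p))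
    (J : (Fin n → ℝ) → Matrix (Fin n) (Fin n) ℝ)
    (hJ : ∀ p, J p = Matrix.diagonal (fun k => s' (p k) * φ p k) +
        a2 • (Matrix.diagonal (fun k => s (p k)) * G *
          (Matrix.diagonal (fun k => s (p k)))ᵀ) +
        invN • (Matrix.diagonal (fun k => s (p k)) * M *
          (Matrix.diagonal (fun k => s (p k)))ᵀ)) :
    ∀ p ∈ P,
      HasFDerivAt b (LinearMap.toContinuousLinearMap ((J p).mulVecLin)) p ∧
      (J p).IsSymm ∧ (J p).PosSemidef := by
  intro p hp
  set S := diagonal fun k => s (p k)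
  set A := a2 • G + invN • M
  have hJS : J p = diagonal (fun k => s' (p k) * φ p k) + S * A * Sᴴ := by
    simp [hJ, S, A, mul_add, add_mul, add_assoc]
  have hφA : φ = fun q => (φ0 + c) + A *ᵥ fun k => pE (q k) := by
    funext q
    rw [hφ, add_mulVec, smul_mulVec, smul_mulVec]
    abel
  have hs' : ∀ x, 0 ≤ s' x := fun x => hmono.deriv_nonneg.trans_eq (hs x).deriv
  have hpsd : (J p).PosSemidef := by
    rw [hJS]
    exact (posSemidef_diagonal_iff.2 fun k => mul_nonneg (hs' _) (hφP p hp k).1).add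
      (((hG.smul ha2).add (hM.smul hinvN)).mul_mul_conjTranspose_same S)
  refine ⟨?_, isHermitian_iff_isSymm.1 hpsd.isHermitian, hpsd⟩
  have hφD := hasFDerivAt_const_add_mulVec_map hpE (φ0 + c) A p
  rw [← hφA] at hφD
  rw [funext hb, hJS, conjTranspose_eq_transpose_of_trivial, diagonal_transpose, Matrix.mul_assoc]
  exact hφD.diagonal_mulVec hs

/-- Jacobian of the algebraic fluid-content map b(p) = S(p)φ(p) (Eq. (35)):
it is symmetric positive semidefinite. -/
theorem fluid_content_jacobian (n : ℕ) (s s' pE : ℝ → ℝ)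
    (hs : ∀ x, HasDerivAt s (s' x) x) (hmono : Monotone s)
    (hsrange : ∀ x, s x ∈ Set.Icc (0:ℝ) 1)
    (hpE : ∀ x, HasDerivAt pE (s x) x)
    (G M : Matrix (Fin n) (Fin n) ℝ) (hG : G.PosSemidef) (hM : M.PosSemidef)
    (a2 invN : ℝ) (ha2 : 0 ≤ a2) (hinvN : 0 ≤ invN)
    (φ0 c : Fin n → ℝ) (P : Set (Fin n → ℝ))
    (φ : (Fin n → ℝ) → (Fin n → ℝ))
    (hφ : ∀ p, φ p = φ0 + a2 • G.mulVec (fun k => pE (p k)) +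
        invN • M.mulVec (fun k => pE (p k)) + c)
    (hφP : ∀ p ∈ P, ∀ k, φ p k ∈ Set.Icc (0:ℝ) 1)
    (b : (Fin n → ℝ) → (Fin n → ℝ))
    (hb : ∀ p, b p = (Matrix.diagonal (fun k => s (p k))).mulVec (φ p))
    (J : (Fin n → ℝ) → Matrix (Fin n) (Fin n) ℝ)
    (hJ : ∀ p, J p = Matrix.diagonal (fun k => s' (p k) * φ p k) +
        a2 • (Matrix.diagonal (fun k => s (p k)) * G *
          (Matrix.diagonal (fun k => s (p k)))ᵀ) +
        invN • (Matrix.diagonal (fun k => s (p k)) * M *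
          (Matrix.diagonal (fun k => s (p k)))ᵀ)) :
    ∀ p ∈ P,
      HasFDerivAt b (LinearMap.toContinuousLinearMap ((J p).mulVecLin)) p ∧
      (J p).IsSymm ∧ (J p).PosSemidef :=
  fluid_content_jacobian_general n s s' pE hs hmono hpE G M hG hM a2 invN ha2 hinvN φ0 c P φ hφ hφP
    b hb J hJ
end

section
/- Let 0 < λ₂ < λ₁ < 1. Then r(λ₁,λ₂) = λ₁²λ₂²(λ₁−λ₂)² / (λ₁(1−λ₁) + λ₂(1−λ₂))² satisfies r(λ₁,λ₂) < λ₁⁴, i.e., restarted Anderson acceleration AA*(1) strictly improves on four steps of the plain Richardson iteration when both eigenvalues lie in (0,1). -/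
/-! With `D = λ₁(1-λ₁) + λ₂(1-λ₂)`, the ratio is `λ₁² q²` for `q = λ₂(λ₁-λ₂)/D`, so it suffices
that `0 ≤ q < λ₁`. The gap `λ₁ D - λ₂(λ₁-λ₂)` factors as `(1-λ₁)(λ₁² + λ₂²)`, which is positive. -/

lemma mul_denom_sub_mul_sub_eq (l1 l2 : ℝ) :
    l1 * (l1 * (1 - l1) + l2 * (1 - l2)) - l2 * (l1 - l2) = (1 - l1) * (l1 ^ 2 + l2 ^ 2) := by
  ring

lemma mul_sub_div_denom_lt (l1 l2 : ℝ) (h2 : 0 < l2) (h1 : l1 < 1)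
    (hD : 0 < l1 * (1 - l1) + l2 * (1 - l2)) :
    l2 * (l1 - l2) / (l1 * (1 - l1) + l2 * (1 - l2)) < l1 := by
  have hgap : 0 < (1 - l1) * (l1 ^ 2 + l2 ^ 2) :=
    mul_pos (sub_pos.2 h1) (by positivity)
  rw [div_lt_iff₀ hD]
  linarith [mul_denom_sub_mul_sub_eq l1 l2]

/-- AA*(1) strictly improves on four plain Richardson steps when both
eigenvalues lie in (0,1). -/
theorem aa_improves_positive_contractive (l1 l2 : ℝ)
    (h2 : 0 < l2) (h12 : l2 < l1) (h1 : l1 < 1) :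
    l1^2 * l2^2 * (l1 - l2)^2 / (l1 * (1 - l1) + l2 * (1 - l2))^2 < l1^4 := by
  set D := l1 * (1 - l1) + l2 * (1 - l2)
  have hl1 : 0 < l1 := h2.trans h12
  have hD : 0 < D :=
    add_pos (mul_pos hl1 (sub_pos.2 h1)) (mul_pos h2 (sub_pos.2 (h12.trans h1)))
  have hq0 : 0 ≤ l2 * (l1 - l2) / D :=
    div_nonneg (mul_nonneg h2.le (sub_nonneg.2 h12.le)) hD.le
  have hq1 : l2 * (l1 - l2) / D < l1 := mul_sub_div_denom_lt l1 l2 h2 h1 hD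
  calc l1^2 * l2^2 * (l1 - l2)^2 / D^2
        = l1 ^ 2 * (l2 * (l1 - l2) / D) ^ 2 := by rw [div_pow]; ring
    _ < l1 ^ 2 * l1 ^ 2 := by gcongr
    _ = l1^4 := by ring
end
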